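/- arXiv:1701.07716 — 2 statements merged into one kernel-verified Lean document; each statement's English description precedes it below -/
import Mathlib

section
/- Let R be a commutative noetherian ring and 𝔞 an ideal. In any short exact sequence 0 → M' → M → M'' → 0 of R-modules, if any two of M', M, M'' are 𝔞-cofinite, then so is the third. -/
open CategoryTheory

/-- An `R`-module `M` is `I`-cofinite if its support is contained in `V(I)` and
`Ext^i_R(R/I, M)` is a finitely generated `R`-module for every `i ≥ 0`. -/
def IsCofinite {R : Type} [CommRing R] (I : Ideal R) (M : Type) [AddCommGroup M]
    [Module R M] : Prop :=
  Module.support R M ⊆ PrimeSpectrum.zeroLocus (I : Set R) ∧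
  ∀ i : ℕ, Module.Finite R
    (((Ext R (ModuleCat R) i).obj (Opposite.op (ModuleCat.of R (R ⧸ I)))).obj
      (ModuleCat.of R M))

/-!
Supports are two-out-of-three because `Supp M = Supp M' ∪ Supp M''`. For the `Ext` condition,
compute `Ext^i(R/I, -)` as the cohomology of `Hom(P, -)` for a projective resolution `P` of
`R/I`. Since every `P_n` is projective, `0 → Hom(P, M') → Hom(P, M) → Hom(P, M'') → 0` is a
short exact sequence of cochain complexes, and in its long exact cohomology sequence each
`Ext` group sits between two neighbours; over a noetherian ring a module flanked by two finitely
generated ones in an exact sequence is finitely generated.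
-/

section HomComplex

variable (R : Type*) [Ring R] {C : Type*} [Category C] [Abelian C] [Linear R C]
  {α : Type*} [AddRightCancelSemigroup α] [One α]

noncomputable def ChainComplex.linearYonedaObjMap (X : ChainComplex C α) {Y Y' : C}
    (φ : Y ⟶ Y') : X.linearYonedaObj R Y ⟶ X.linearYonedaObj R Y' where
  f i := ((linearYoneda R C).map φ).app (Opposite.op (X.X i))
  comm' i j _ := (((linearYoneda R C).map φ).naturality (X.d j i).op).symm

lemma ChainComplex.shortExact_linearYonedaObj (X : ChainComplex C α)
    [∀ i, Projective (X.X i)] {S : ShortComplex C} (hS : S.ShortExact) :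
    (ShortComplex.mk (X.linearYonedaObjMap R S.f) (X.linearYonedaObjMap R S.g)
      (by ext i (u : X.X i ⟶ S.X₁); exact (Category.assoc u S.f S.g).trans (by simp; rfl))
      ).ShortExact := by
  have := hS.mono_f
  have := hS.epi_g
  refine HomologicalComplex.shortExact_of_degreewise_shortExact _ fun i =>
    ModuleCat.shortComplex_shortExact _ ?_ ?_ ?_
  · intro u
    refine ⟨fun hu => ⟨hS.exact.lift u hu, hS.exact.lift_f u hu⟩, ?_⟩
    rintro ⟨(v : X.X i ⟶ S.X₁), rfl⟩
    exact (Category.assoc v S.f S.g).trans (by simp; rfl)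
  · intro u v huv
    exact (cancel_mono S.f).1 huv
  · intro w
    exact ⟨Projective.factorThru w S.g, Projective.factorThru_comp w S.g⟩

end HomComplex

lemma Module.Finite.of_exact_of_isNoetherianRing {R M N P : Type*} [CommRing R]
    [IsNoetherianRing R] [AddCommGroup M] [Module R M] [AddCommGroup N] [Module R N]
    [AddCommGroup P] [Module R P] {f : M →ₗ[R] N} {g : N →ₗ[R] P} (hfg : Function.Exact f g)
    [Module.Finite R M] [Module.Finite R P] : Module.Finite R N :=
  Module.Finite.of_exact (f := f) (g := g.rangeRestrict)
    (fun y => by rw [← hfg y, ← LinearMap.mem_ker, LinearMap.ker_rangeRestrict, LinearMap.mem_ker])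
    g.surjective_rangeRestrict

namespace CategoryTheory.ShortComplex

variable {R : Type*} [CommRing R] [IsNoetherianRing R]

lemma Exact.moduleCat_finite_X₂ {S : ShortComplex (ModuleCat R)} (hS : S.Exact)
    [Module.Finite R S.X₁] [Module.Finite R S.X₃] : Module.Finite R S.X₂ :=
  Module.Finite.of_exact_of_isNoetherianRing
    ((ShortExact.moduleCat_exact_iff_function_exact S).mp hS)

namespace ShortExact

variable {S : ShortComplex (CochainComplex (ModuleCat R) ℕ)} (hS : S.ShortExact)
include hS

lemma finite_homology_X₁ (h₂ : ∀ i, Module.Finite R (S.X₂.homology i))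
    (h₃ : ∀ i, Module.Finite R (S.X₃.homology i)) (i : ℕ) :
    Module.Finite R (S.X₁.homology i) := by
  cases i with
  | zero =>
    have := hS.mono_f
    have := HomologicalComplex.mono_homologyMap_of_mono_of_not_rel S.f 0 (by simp)
    exact Module.Finite.of_injective (HomologicalComplex.homologyMap S.f 0).hom
      ((ModuleCat.mono_iff_injective _).1 this)
  | succ n => exact (hS.homology_exact₁ n (n + 1) rfl).moduleCat_finite_X₂

lemma finite_homology_X₂ (h₁ : ∀ i, Module.Finite R (S.X₁.homology i))
    (h₃ : ∀ i, Module.Finite R (S.X₃.homology i)) (i : ℕ) :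
    Module.Finite R (S.X₂.homology i) :=
  (hS.homology_exact₂ i).moduleCat_finite_X₂

lemma finite_homology_X₃ (h₁ : ∀ i, Module.Finite R (S.X₁.homology i))
    (h₂ : ∀ i, Module.Finite R (S.X₂.homology i)) (i : ℕ) :
    Module.Finite R (S.X₃.homology i) :=
  (hS.homology_exact₃ i (i + 1) rfl).moduleCat_finite_X₂

end ShortExact

end CategoryTheory.ShortComplex

lemma isCofinite_iff_finite_homology {R : Type} [CommRing R] {I : Ideal R}
    (P : ProjectiveResolution (ModuleCat.of R (R ⧸ I))) (M : Type) [AddCommGroup M]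
    [Module R M] :
    IsCofinite I M ↔ Module.support R M ⊆ PrimeSpectrum.zeroLocus (I : Set R) ∧
      ∀ i, Module.Finite R ((P.complex.linearYonedaObj R (ModuleCat.of R M)).homology i) :=
  and_congr_right' <| forall_congr' fun i =>
    ⟨fun _ => .equiv (P.isoExt i _).toLinearEquiv,
      fun _ => .equiv (P.isoExt i _).toLinearEquiv.symm⟩

/-- Two-of-three property: in a short exact sequence `0 → M' → M → M'' → 0` of modules
over a commutative noetherian ring, if any two of `M'`, `M`, `M''` are `I`-cofinite, then
so is the third. -/
theorem cofinite_two_of_three {R : Type} [CommRing R] [IsNoetherianRing R] (I : Ideal R)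
    {M' M M'' : Type} [AddCommGroup M'] [Module R M'] [AddCommGroup M] [Module R M]
    [AddCommGroup M''] [Module R M'']
    (f : M' →ₗ[R] M) (g : M →ₗ[R] M'')
    (hf : Function.Injective f) (hg : Function.Surjective g)
    (hfg : Function.Exact f g) :
    (IsCofinite I M' → IsCofinite I M → IsCofinite I M'') ∧
    (IsCofinite I M' → IsCofinite I M'' → IsCofinite I M) ∧
    (IsCofinite I M → IsCofinite I M'' → IsCofinite I M') := by
  have hsupp : Module.support R M = Module.support R M' ∪ Module.support R M'' :=
    Module.support_of_exact hfg hf hg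
  let P := projectiveResolution (ModuleCat.of R (R ⧸ I))
  have hS := P.complex.shortExact_linearYonedaObj R <| ModuleCat.shortComplex_shortExact
    (ModuleCat.shortComplexOfCompEqZero f g hfg.linearMap_comp_eq_zero) hfg hf hg
  simp only [isCofinite_iff_finite_homology P]
  refine ⟨fun h₁ h₂ => ⟨?_, hS.finite_homology_X₃ h₁.2 h₂.2⟩,
    fun h₁ h₃ => ⟨?_, hS.finite_homology_X₂ h₁.2 h₃.2⟩,
    fun h₂ h₃ => ⟨?_, hS.finite_homology_X₁ h₂.2 h₃.2⟩⟩
  · exact (hsupp ▸ Set.subset_union_right).trans h₂.1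
  · exact hsupp ▸ Set.union_subset h₁.1 h₃.1
  · exact (hsupp ▸ Set.subset_union_left).trans h₂.1
end

section
/- Let F : D(R) → D(S) be a triangulated, way-out covariant functor, A an additive subcategory of R-modules, and B an abelian, extension-closed subcategory of S-modules such that H_i(F(M)) ∈ B for every M ∈ A and every i ∈ ℤ. Then for every R-complex X (not necessarily bounded) with H_i(X) ∈ A for all i, one has H_i(F(X)) ∈ B for all i ∈ ℤ. -/
open CategoryTheory Limits DerivedCategory

section WayOut

variable {R S : Type} [CommRing R] [CommRing S]
  [HasDerivedCategory (ModuleCat.{0} R)] [HasDerivedCategory (ModuleCat.{0} S)]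

/-- `F` is way-out left: for every `n` there is an `m` such that if `sup X ≤ m`
(i.e. `Hᵢ(X) = 0` for `i > m`), then `sup F(X) ≤ n`. -/
def WayOutLeft (F : DerivedCategory (ModuleCat R) ⥤ DerivedCategory (ModuleCat S)) :
    Prop :=
  ∀ n : ℤ, ∃ m : ℤ, ∀ X : DerivedCategory (ModuleCat R),
    (∀ i : ℤ, m < i → IsZero ((homologyFunctor (ModuleCat R) i).obj X)) →
    ∀ i : ℤ, n < i → IsZero ((homologyFunctor (ModuleCat S) i).obj (F.obj X))

/-- `F` is way-out right: for every `n` there is an `m` such that if `inf X ≥ m`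
(i.e. `Hᵢ(X) = 0` for `i < m`), then `inf F(X) ≥ n`. -/
def WayOutRight (F : DerivedCategory (ModuleCat R) ⥤ DerivedCategory (ModuleCat S)) :
    Prop :=
  ∀ n : ℤ, ∃ m : ℤ, ∀ X : DerivedCategory (ModuleCat R),
    (∀ i : ℤ, i < m → IsZero ((homologyFunctor (ModuleCat R) i).obj X)) →
    ∀ i : ℤ, i < n → IsZero ((homologyFunctor (ModuleCat S) i).obj (F.obj X))

end WayOut

/-!
The truncations `τ≤a X` and `τ>a X` for the canonical t-structure have the homology of `X` in
their own range of degrees and zero elsewhere, so they still have homology in `A`. Since `B`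
is abelian and closed under extensions, the long exact homology sequence shows that
`B`-valued homology passes to the middle term of a distinguished triangle. Hence, by
induction along the truncation triangles, the claim holds for bounded `X`: an object
concentrated in one degree is a shifted module of `A`, where it is the hypothesis on `F`.
For unbounded `X` and a fixed degree `n`, the way-out conditions provide `a` and `c` such
that `Hₙ F(X) ≅ Hₙ F(τ≤c τ>a X)`.
-/

open Pretriangulated DerivedCategory.TStructure

namespace CategoryTheory.ObjectProperty

variable {C : Type*} [Category* C] (P : ObjectProperty C)

lemma isClosedUnderKernels_of_prop_kernel [HasZeroMorphisms C] [HasKernels C]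
    [P.IsClosedUnderIsomorphisms] (h : ∀ (X Y : C) (f : X ⟶ Y), P X → P Y → P (kernel f)) :
    P.IsClosedUnderKernels where
  kernels_le := by
    rintro _ ⟨f, k, hk, hX, hY⟩
    exact P.prop_of_iso ((kernelIsKernel f).conePointUniqueUpToIso hk) (h _ _ f hX hY)

lemma isClosedUnderCokernels_of_prop_cokernel [HasZeroMorphisms C] [HasCokernels C]
    [P.IsClosedUnderIsomorphisms] (h : ∀ (X Y : C) (f : X ⟶ Y), P X → P Y → P (cokernel f)) :
    P.IsClosedUnderCokernels where
  cokernels_le := by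
    rintro _ ⟨f, k, hk, hX, hY⟩
    exact P.prop_of_iso ((cokernelIsCokernel f).coconePointUniqueUpToIso hk) (h _ _ f hX hY)

lemma prop_of_exact [Abelian C] [P.IsClosedUnderKernels] [P.IsClosedUnderCokernels]
    [P.IsClosedUnderExtensions] {X₀ X₁ X₂ X₃ X₄ : C}
    {f₀ : X₀ ⟶ X₁} {f₁ : X₁ ⟶ X₂} {f₂ : X₂ ⟶ X₃} {f₃ : X₃ ⟶ X₄}
    {w₀ : f₀ ≫ f₁ = 0} {w₁ : f₁ ≫ f₂ = 0} {w₂ : f₂ ≫ f₃ = 0}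
    (h₁ : (ShortComplex.mk f₀ f₁ w₀).Exact) (h₂ : (ShortComplex.mk f₁ f₂ w₁).Exact)
    (h₃ : (ShortComplex.mk f₂ f₃ w₂).Exact)
    (hX₀ : P X₀) (hX₁ : P X₁) (hX₃ : P X₃) (hX₄ : P X₄) : P X₂ := by
  -- `X₂` is an extension of `ker f₃` by `coker f₀`.
  let i := cokernel.desc f₀ f₁ w₀
  let p := kernel.lift f₃ f₂ w₂
  have w : f₁ ≫ p = 0 := by ext; simp [p, w₁]
  have wip : i ≫ p = 0 := by ext; simp [i, w]
  have h₂' : (ShortComplex.mk f₁ p w).Exact := by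
    let φ : ShortComplex.mk f₁ p w ⟶ ShortComplex.mk f₁ f₂ w₁ :=
      { τ₁ := 𝟙 _, τ₂ := 𝟙 _, τ₃ := kernel.ι f₃ }
    have : Epi φ.τ₁ := inferInstanceAs (Epi (𝟙 _))
    have : IsIso φ.τ₂ := inferInstanceAs (IsIso (𝟙 _))
    have : Mono φ.τ₃ := inferInstanceAs (Mono (kernel.ι f₃))
    exact (ShortComplex.exact_iff_of_epi_of_isIso_of_mono φ).2 h₂
  have hip : (ShortComplex.mk i p wip).Exact := by
    let φ : ShortComplex.mk f₁ p w ⟶ ShortComplex.mk i p wip :=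
      { τ₁ := cokernel.π f₀, τ₂ := 𝟙 _, τ₃ := 𝟙 _ }
    have : Epi φ.τ₁ := inferInstanceAs (Epi (cokernel.π f₀))
    have : IsIso φ.τ₂ := inferInstanceAs (IsIso (𝟙 _))
    have : Mono φ.τ₃ := inferInstanceAs (Mono (𝟙 _))
    exact (ShortComplex.exact_iff_of_epi_of_isIso_of_mono φ).1 h₂'
  have : Mono i := (ShortComplex.exact_iff_mono_cokernel_desc _).1 h₁
  have : Epi p := (ShortComplex.exact_iff_epi_kernel_lift _).1 h₃
  exact P.prop_X₂_of_shortExact { exact := hip }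
    (P.prop_cokernel f₀ hX₀ hX₁) (P.prop_kernel f₃ hX₃ hX₄)

end CategoryTheory.ObjectProperty

namespace DerivedCategory

universe w w'

variable {C : Type*} [Category* C] [Abelian C] [HasDerivedCategory.{w} C]

def homologyIn (P : ObjectProperty C) : ObjectProperty (DerivedCategory C) :=
  fun X ↦ ∀ n : ℤ, P ((homologyFunctor C n).obj X)

instance (P : ObjectProperty C) [P.IsClosedUnderIsomorphisms] :
    (homologyIn P).IsClosedUnderIsomorphisms where
  of_iso e hX n := P.prop_of_iso ((homologyFunctor C n).mapIso e) (hX n)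

lemma isIso_homologyMap_mor₁_of_isGE (T : Triangle (DerivedCategory C)) (hT : T ∈ distTriang _)
    (a : ℤ) (h₃ : T.obj₃.IsGE a) (n : ℤ) (hn : n < a) :
    IsIso ((homologyFunctor C n).map T.mor₁) := by
  have : Mono ((homologyFunctor C n).map T.mor₁) :=
    (HomologySequence.mono_homologyMap_mor₁_iff T hT (n - 1) n).2
      ((T.obj₃.isZero_of_isGE a (n - 1) (by omega)).eq_of_src _ _)
  have : Epi ((homologyFunctor C n).map T.mor₁) :=
    (HomologySequence.epi_homologyMap_mor₁_iff T hT n).2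
      ((T.obj₃.isZero_of_isGE a n hn).eq_of_tgt _ _)
  exact isIso_of_mono_of_epi _

lemma isIso_homologyMap_mor₂_of_isLE (T : Triangle (DerivedCategory C)) (hT : T ∈ distTriang _)
    (a : ℤ) (h₁ : T.obj₁.IsLE a) (n : ℤ) (hn : a < n) :
    IsIso ((homologyFunctor C n).map T.mor₂) := by
  have : Mono ((homologyFunctor C n).map T.mor₂) :=
    (HomologySequence.mono_homologyMap_mor₂_iff T hT n).2
      ((T.obj₁.isZero_of_isLE a n hn).eq_of_src _ _)
  have : Epi ((homologyFunctor C n).map T.mor₂) :=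
    (HomologySequence.epi_homologyMap_mor₂_iff T hT n (n + 1)).2
      ((T.obj₁.isZero_of_isLE a (n + 1) (by omega)).eq_of_tgt _ _)
  exact isIso_of_mono_of_epi _

section

variable (P : ObjectProperty C)

lemma homologyIn_obj₂_of_distinguished [P.IsClosedUnderKernels] [P.IsClosedUnderCokernels]
    [P.IsClosedUnderExtensions] (T : Triangle (DerivedCategory C)) (hT : T ∈ distTriang _)
    (h₁ : homologyIn P T.obj₁) (h₃ : homologyIn P T.obj₃) : homologyIn P T.obj₂ := fun n ↦
  P.prop_of_exact (HomologySequence.exact₁ T hT (n - 1) n) (HomologySequence.exact₂ T hT n)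
    (HomologySequence.exact₃ T hT n (n + 1)) (h₃ (n - 1)) (h₁ n) (h₃ n) (h₁ (n + 1))

variable [P.IsClosedUnderIsomorphisms] [P.ContainsZero]

lemma homologyIn_truncLE (a : ℤ) {X : DerivedCategory C} (hX : homologyIn P X) :
    homologyIn P ((t.truncLE a).obj X) := by
  intro n
  by_cases hn : n ≤ a
  · have e := isIso_homologyMap_mor₁_of_isGE _ (t.triangleLEGT_distinguished a X) (a + 1)
      (inferInstance : ((t.truncGT a).obj X).IsGE (a + 1)) n (by omega)
    exact P.prop_of_iso (@asIso _ _ _ _ _ e).symm (hX n)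
  · exact P.prop_of_isZero (isZero_of_isLE _ a n (by omega))

lemma homologyIn_truncGT (a : ℤ) {X : DerivedCategory C} (hX : homologyIn P X) :
    homologyIn P ((t.truncGT a).obj X) := by
  intro n
  by_cases hn : a < n
  · have e := isIso_homologyMap_mor₂_of_isLE _ (t.triangleLEGT_distinguished a X) a
      (inferInstance : ((t.truncLE a).obj X).IsLE a) n hn
    exact P.prop_of_iso (@asIso _ _ _ _ _ e) (hX n)
  · exact P.prop_of_isZero (isZero_of_isGE _ (a + 1) n (by omega))

end

section

variable {D : Type*} [Category* D] [Abelian D] [HasDerivedCategory.{w'} D]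
  (F : DerivedCategory C ⥤ DerivedCategory D) [F.CommShift ℤ]

lemma homologyIn_map_singleFunctor_obj (B : ObjectProperty D) [B.IsClosedUnderIsomorphisms]
    {M : C} (hM : homologyIn B (F.obj ((singleFunctor C 0).obj M))) (n : ℤ) :
    homologyIn B (F.obj ((singleFunctor C n).obj M)) := fun i ↦ by
  have e : ((singleFunctor C 0).obj M)⟦-n⟧ ≅ (singleFunctor C n).obj M :=
    ((singleFunctors C).shiftIso (-n) n 0 (by omega)).app M
  refine B.prop_of_iso ?_ (hM (-n + i))
  exact (((homologyFunctor D 0).shiftIso (-n) i (-n + i) rfl).app _).symm ≪≫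
    (homologyFunctor D i).mapIso (((F.commShiftIso (-n)).app _).symm ≪≫ F.mapIso e)

variable (A : ObjectProperty C) (B : ObjectProperty D)
  [A.IsClosedUnderIsomorphisms] [B.IsClosedUnderIsomorphisms]
  (hF : ∀ M, A M → homologyIn B (F.obj ((singleFunctor C 0).obj M)))
include hF

lemma homologyIn_map_of_isGE_of_isLE_self (n : ℤ) (X : DerivedCategory C) [X.IsGE n] [X.IsLE n]
    (hX : homologyIn A X) : homologyIn B (F.obj X) := by
  obtain ⟨M, ⟨e⟩⟩ := exists_iso_singleFunctor_obj_of_isGE_of_isLE X n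
  have hM : A M := A.prop_of_iso
    ((homologyFunctor C n).mapIso e ≪≫ (singleFunctorCompHomologyFunctorIso C n).app M) (hX n)
  exact (homologyIn B).prop_of_iso (F.mapIso e).symm
    (homologyIn_map_singleFunctor_obj F B (hF M hM) n)

variable [F.IsTriangulated] [A.ContainsZero] [B.IsClosedUnderKernels] [B.IsClosedUnderCokernels]
  [B.IsClosedUnderExtensions]

lemma homologyIn_map_of_isGE_of_isLE (a b : ℤ) (hab : a ≤ b) (X : DerivedCategory C)
    [X.IsGE a] [X.IsLE b] (hX : homologyIn A X) : homologyIn B (F.obj X) := by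
  induction b, hab using Int.leInduction generalizing X with
  | base => exact homologyIn_map_of_isGE_of_isLE_self F A B hF a X hX
  | succ b hab ih =>
    refine homologyIn_obj₂_of_distinguished B _
      (F.map_distinguished _ (t.triangleLEGT_distinguished b X)) ?_ ?_
    · exact ih ((t.truncLE b).obj X) (homologyIn_truncLE A b hX)
    · exact homologyIn_map_of_isGE_of_isLE_self F A B hF (b + 1) ((t.truncGT b).obj X)
        (homologyIn_truncGT A b hX)

lemma homologyIn_map (hFl : ∀ n, ∃ m, ∀ X : DerivedCategory C, X.IsLE m → (F.obj X).IsLE n)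
    (hFr : ∀ n, ∃ m, ∀ X : DerivedCategory C, X.IsGE m → (F.obj X).IsGE n)
    (X : DerivedCategory C) (hX : homologyIn A X) : homologyIn B (F.obj X) := by
  intro n
  -- Truncating below `a` and above `c` does not change `Hₙ(F -)`, and leaves a bounded object.
  obtain ⟨a, ha⟩ := hFl (n - 1)
  obtain ⟨b, hb⟩ := hFr (n + 1)
  let Y := (t.truncGT a).obj X
  let c := max (a + 1) b
  have hXY := isIso_homologyMap_mor₂_of_isLE _
    (F.map_distinguished _ (t.triangleLEGT_distinguished a X)) (n - 1)
    (ha ((t.truncLE a).obj X) inferInstance) n (by omega)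
  have hZY := isIso_homologyMap_mor₁_of_isGE _
    (F.map_distinguished _ (t.triangleLEGT_distinguished c Y)) (n + 1)
    (hb ((t.truncGT c).obj Y) (t.isGE_of_ge _ b (c + 1) (by omega))) n (by omega)
  have hZ := homologyIn_map_of_isGE_of_isLE F A B hF (a + 1) c (le_max_left _ _)
    ((t.truncLE c).obj Y) (homologyIn_truncLE A c (homologyIn_truncGT A a hX))
  exact B.prop_of_iso (@asIso _ _ _ _ _ hZY ≪≫ (@asIso _ _ _ _ _ hXY).symm) (hZ n)

end

end DerivedCategory

section

variable {R S : Type} [CommRing R] [CommRing S]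
  [HasDerivedCategory (ModuleCat.{0} R)] [HasDerivedCategory (ModuleCat.{0} S)]
  {F : DerivedCategory (ModuleCat R) ⥤ DerivedCategory (ModuleCat S)}

lemma WayOutLeft.exists_isLE (hF : WayOutLeft F) (n : ℤ) :
    ∃ m, ∀ X, X.IsLE m → (F.obj X).IsLE n := by
  obtain ⟨m, hm⟩ := hF n
  exact ⟨m, fun X hX ↦ (isLE_iff _ n).2 (hm X ((isLE_iff X m).1 hX))⟩

lemma WayOutRight.exists_isGE (hF : WayOutRight F) (n : ℤ) :
    ∃ m, ∀ X, X.IsGE m → (F.obj X).IsGE n := by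
  obtain ⟨m, hm⟩ := hF n
  exact ⟨m, fun X hX ↦ (isGE_iff _ n).2 (hm X ((isGE_iff X m).1 hX))⟩

end

theorem wayOutLemma_general {R S : Type} [CommRing R] [CommRing S]
    [HasDerivedCategory (ModuleCat.{0} R)] [HasDerivedCategory (ModuleCat.{0} S)]
    (F : DerivedCategory (ModuleCat R) ⥤ DerivedCategory (ModuleCat S))
    [F.CommShift ℤ] [F.IsTriangulated]
    (hFl : WayOutLeft F) (hFr : WayOutRight F)
    (A : ModuleCat R → Prop) (B : ModuleCat S → Prop)
    -- `A` is an additive subcategory: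
    (hAiso : ∀ (M N : ModuleCat R), (M ≅ N) → A M → A N)
    (hAzero : A (ModuleCat.of R PUnit))
    -- `B` is an abelian subcategory, closed under extensions:
    (hBiso : ∀ (M N : ModuleCat S), (M ≅ N) → B M → B N)
    (hBker : ∀ (M N : ModuleCat S) (f : M ⟶ N), B M → B N → B (kernel f))
    (hBcoker : ∀ (M N : ModuleCat S) (f : M ⟶ N), B M → B N → B (cokernel f))
    (hBext : ∀ (c : ShortComplex (ModuleCat S)), c.ShortExact →
      B c.X₁ → B c.X₃ → B c.X₂)
    -- homology of `F` of a module in `A` lies in `B`: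
    (hF : ∀ (M : ModuleCat R), A M → ∀ i : ℤ,
      B ((homologyFunctor (ModuleCat S) i).obj
        (F.obj ((singleFunctor (ModuleCat R) 0).obj M))))
    (X : DerivedCategory (ModuleCat R))
    (hXA : ∀ i : ℤ, A ((homologyFunctor (ModuleCat R) i).obj X)) :
    ∀ i : ℤ, B ((homologyFunctor (ModuleCat S) i).obj (F.obj X)) := by
  have : ObjectProperty.IsClosedUnderIsomorphisms A := ⟨fun e h ↦ hAiso _ _ e h⟩
  have : ObjectProperty.ContainsZero A := ⟨⟨_, ModuleCat.isZero_of_subsingleton _, hAzero⟩⟩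
  have : ObjectProperty.IsClosedUnderIsomorphisms B := ⟨fun e h ↦ hBiso _ _ e h⟩
  have := ObjectProperty.isClosedUnderKernels_of_prop_kernel B hBker
  have := ObjectProperty.isClosedUnderCokernels_of_prop_cokernel B hBcoker
  have : ObjectProperty.IsClosedUnderExtensions B := ⟨fun hS h₁ h₃ ↦ hBext _ hS h₁ h₃⟩
  exact homologyIn_map F A B hF hFl.exists_isLE hFr.exists_isGE X hXA

/-- The way-out lemma, unbounded case.  Let `F : D(R) → D(S)` be a triangulated, way-out
covariant functor, `A` an additive subcategory of `R`-modules and `B` an abelian,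
extension-closed subcategory of `S`-modules such that all homology of `F(M)` lies in `B`
for every module `M` in `A`.  Then for every (not necessarily bounded) complex `X` whose
homology modules all lie in `A`, all homology modules of `F(X)` lie in `B`. -/
theorem wayOutLemma {R S : Type} [CommRing R] [CommRing S]
    [HasDerivedCategory (ModuleCat.{0} R)] [HasDerivedCategory (ModuleCat.{0} S)]
    (F : DerivedCategory (ModuleCat R) ⥤ DerivedCategory (ModuleCat S))
    [F.CommShift ℤ] [F.IsTriangulated]
    (hFl : WayOutLeft F) (hFr : WayOutRight F)
    (A : ModuleCat R → Prop) (B : ModuleCat S → Prop)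
    -- `A` is an additive subcategory:
    (hAiso : ∀ (M N : ModuleCat R), (M ≅ N) → A M → A N)
    (hAzero : A (ModuleCat.of R PUnit))
    (hAprod : ∀ (M N : ModuleCat R), A M → A N → A (M ⊞ N))
    -- `B` is an abelian subcategory, closed under extensions:
    (hBiso : ∀ (M N : ModuleCat S), (M ≅ N) → B M → B N)
    (hBzero : B (ModuleCat.of S PUnit))
    (hBker : ∀ (M N : ModuleCat S) (f : M ⟶ N), B M → B N → B (kernel f))
    (hBcoker : ∀ (M N : ModuleCat S) (f : M ⟶ N), B M → B N → B (cokernel f))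
    (hBext : ∀ (c : ShortComplex (ModuleCat S)), c.ShortExact →
      B c.X₁ → B c.X₃ → B c.X₂)
    -- homology of `F` of a module in `A` lies in `B`:
    (hF : ∀ (M : ModuleCat R), A M → ∀ i : ℤ,
      B ((homologyFunctor (ModuleCat S) i).obj
        (F.obj ((singleFunctor (ModuleCat R) 0).obj M))))
    (X : DerivedCategory (ModuleCat R))
    (hXA : ∀ i : ℤ, A ((homologyFunctor (ModuleCat R) i).obj X)) :
    ∀ i : ℤ, B ((homologyFunctor (ModuleCat S) i).obj (F.obj X)) :=
  wayOutLemma_general F hFl hFr A B hAiso hAzero hBiso hBker hBcoker hBext hF X hXA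
end
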